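/- arXiv:0909.5652 — 2 statements merged into one kernel-verified Lean document; each statement's English description precedes it below -/
import Mathlib

section
/- Let n be a positive integer, let f : {0,1}^n → {0,1} be a monotone Boolean function, and let L be an invertible n×n matrix over the field F_2. Then the total influence of f is at most the total influence of Lf, i.e. I(f) ≤ I(Lf). -/
open Finset

/-- The influence of the `i`-th variable on a Boolean function
`f : {0,1}^n → {0,1}`: `I_i(f) = 2^{-n} Σ_x |f(x+e_i) − f(x)|`. -/
noncomputable def inflCoord (n : ℕ) (f : (Fin n → ZMod 2) → ZMod 2) (i : Fin n) : ℝ :=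
  (1 / 2 ^ n) * ∑ x : Fin n → ZMod 2,
    |((f (x + Pi.single i 1)).val : ℝ) - ((f x).val : ℝ)|

/-- The influence of a vector `y` on a Boolean function `f`:
`I_y(f) = 2^{-n} Σ_x |f(x+y) − f(x)|`. -/
noncomputable def inflVec (n : ℕ) (f : (Fin n → ZMod 2) → ZMod 2) (y : Fin n → ZMod 2) : ℝ :=
  (1 / 2 ^ n) * ∑ x : Fin n → ZMod 2,
    |((f (x + y)).val : ℝ) - ((f x).val : ℝ)|

/-- The total influence `I(f) = Σ_i I_i(f)`. -/
noncomputable def totalInfl (n : ℕ) (f : (Fin n → ZMod 2) → ZMod 2) : ℝ :=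
  ∑ i : Fin n, inflCoord n f i

/-- A Boolean function is monotone if `x_i ≤ y_i` for all `i` implies `f(x) ≤ f(y)`. -/
def IsMonotoneBF (n : ℕ) (f : (Fin n → ZMod 2) → ZMod 2) : Prop :=
  ∀ x y : Fin n → ZMod 2, (∀ i, (x i).val ≤ (y i).val) → (f x).val ≤ (f y).val

private lemma abs4 (a b c d : ℝ) (h1 : a ≤ b) (h2 : c ≤ d) :
    |b - a| + |d - c| ≤ |d - a| + |b - c| := by
  have h3 := le_abs_self (d - a)
  have h4 := le_abs_self (b - c)
  rw [abs_of_nonneg (by linarith : (0:ℝ) ≤ b - a),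
      abs_of_nonneg (by linarith : (0:ℝ) ≤ d - c)]
  linarith

private lemma mono_step (n : ℕ) (f : (Fin n → ZMod 2) → ZMod 2) (hf : IsMonotoneBF n f)
    (x : Fin n → ZMod 2) (j : Fin n) (hx : x j = 0) :
    ((f x).val : ℝ) ≤ ((f (x + Pi.single j 1)).val : ℝ) := by
  have h := hf x (x + Pi.single j 1) ?_
  · exact_mod_cast h
  · intro i
    by_cases h : i = j
    · subst h
      simp [hx]
    · simp [Pi.single_apply, h]

private lemma infl_coord_le_vec (n : ℕ) (f : (Fin n → ZMod 2) → ZMod 2)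
    (hf : IsMonotoneBF n f) (y : Fin n → ZMod 2) (j : Fin n) (hy : y j = 1) :
    inflCoord n f j ≤ inflVec n f y := by
  classical
  set G : (Fin n → ZMod 2) → ℝ := fun x => ((f x).val : ℝ) with hG
  set e : Fin n → ZMod 2 := Pi.single j 1 with he
  set z : Fin n → ZMod 2 := y + e with hzdef
  have hchar : ∀ v : Fin n → ZMod 2, v + v = 0 := by
    intro v; funext i
    have : ∀ a : ZMod 2, a + a = 0 := by decide
    simpa using this (v i)
  have hzy : z + y = e := by
    rw [hzdef, add_right_comm, hchar, zero_add]
  have hze : z + e = y := by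
    rw [hzdef, add_assoc, hchar, add_zero]
  have hzz : z + z = 0 := hchar z
  have hej : e j = 1 := by simp [he]
  have hzj : z j = 0 := by
    have : (1 : ZMod 2) + 1 = 0 := by decide
    simp [hzdef, hy, hej, this]
  have key : ∀ x : Fin n → ZMod 2,
      |G (x + e) - G x| + |G (x + y) - G (x + z)| ≤
      |G (x + y) - G x| + |G (x + e) - G (x + z)| := by
    intro x
    have hcase : ∀ a : ZMod 2, a = 0 ∨ a = 1 := by decide
    rcases hcase (x j) with h0 | h1
    · have ha : G x ≤ G (x + e) := mono_step n f hf x j h0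
      have hc : G (x + z) ≤ G ((x + z) + e) := by
        apply mono_step n f hf (x + z) j
        simp [h0, hzj]
      rw [add_assoc, hze] at hc
      exact abs4 (G x) (G (x + e)) (G (x + z)) (G (x + y)) ha hc
    · have hx' : (x + e) j = 0 := by
        have : (1 : ZMod 2) + 1 = 0 := by decide
        simp [h1, hej, this]
      have ha : G (x + e) ≤ G ((x + e) + e) := mono_step n f hf (x + e) j hx'
      rw [add_assoc, hchar, add_zero] at ha
      have hc : G ((x + e) + z) ≤ G (((x + e) + z) + e) := by
        apply mono_step n f hf ((x + e) + z) j
        simp [hx', hzj]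
      have h1' : (x + e) + z = x + y := by
        rw [add_assoc, add_comm e z, hze]
      have h2' : ((x + e) + z) + e = x + z := by
        rw [h1', add_assoc, ← hzdef]
      rw [h2', h1'] at hc
      have := abs4 (G (x + e)) (G x) (G (x + y)) (G (x + z)) ha hc
      calc |G (x + e) - G x| + |G (x + y) - G (x + z)|
          = |G x - G (x + e)| + |G (x + z) - G (x + y)| := by
            rw [abs_sub_comm, abs_sub_comm (G (x + y))]
        _ ≤ |G (x + z) - G (x + e)| + |G x - G (x + y)| := this
        _ = |G (x + y) - G x| + |G (x + e) - G (x + z)| := by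
            rw [abs_sub_comm (G x) (G (x + y)), abs_sub_comm (G (x + z)) (G (x + e))]
            ring
  have hS1 : ∑ x : Fin n → ZMod 2, |G (x + e) - G x|
      = ∑ x : Fin n → ZMod 2, |G (x + y) - G (x + z)| := by
    apply Fintype.sum_equiv (Equiv.addRight z)
    intro x
    simp only [Equiv.coe_addRight]
    rw [add_assoc, hzy, add_assoc, hzz, add_zero]
  have hS2 : ∑ x : Fin n → ZMod 2, |G (x + y) - G x|
      = ∑ x : Fin n → ZMod 2, |G (x + e) - G (x + z)| := by
    apply Fintype.sum_equiv (Equiv.addRight z)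
    intro x
    simp only [Equiv.coe_addRight]
    rw [add_assoc, hze, add_assoc, hzz, add_zero]
  have hsum : ∑ x : Fin n → ZMod 2, |G (x + e) - G x|
      ≤ ∑ x : Fin n → ZMod 2, |G (x + y) - G x| := by
    have h2 : ∑ x : Fin n → ZMod 2, (|G (x + e) - G x| + |G (x + y) - G (x + z)|)
        ≤ ∑ x : Fin n → ZMod 2, (|G (x + y) - G x| + |G (x + e) - G (x + z)|) :=
      Finset.sum_le_sum fun x _ => key x
    rw [Finset.sum_add_distrib, Finset.sum_add_distrib, ← hS1, ← hS2] at h2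
    linarith
  unfold inflCoord inflVec
  have hpos : (0:ℝ) ≤ 1 / 2 ^ n := by positivity
  exact mul_le_mul_of_nonneg_left hsum hpos

/-- **Keller–Pilpel conjecture** (Christofides): if `f` is a monotone Boolean function
on `n ≥ 1` variables and `L` is an invertible matrix over `F_2`, then
`I(f) ≤ I(Lf)` where `Lf(x) = f(Lx)`. -/
theorem total_influence_le_of_monotone (n : ℕ) (hn : 0 < n)
    (f : (Fin n → ZMod 2) → ZMod 2) (hf : IsMonotoneBF n f)
    (L : Matrix (Fin n) (Fin n) (ZMod 2)) (hL : IsUnit L) :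
    totalInfl n f ≤ totalInfl n (fun x => f (L.mulVec x)) := by
  classical
  -- the i-th influence of Lf is the influence of column i of L on f
  have hLcoord : ∀ i, inflCoord n (fun x => f (L.mulVec x)) i
      = inflVec n f (L.mulVec (Pi.single i 1)) := by
    intro i
    obtain ⟨M, hM⟩ := hL
    have hbij : Function.Bijective (fun v : Fin n → ZMod 2 => L.mulVec v) := by
      rw [Function.bijective_iff_has_inverse]
      have hdetM : IsUnit (M : Matrix (Fin n) (Fin n) (ZMod 2)).det :=
        (Matrix.isUnit_iff_isUnit_det _).mp M.isUnit
      refine ⟨fun v => (↑M : Matrix (Fin n) (Fin n) (ZMod 2))⁻¹.mulVec v, ?_, ?_⟩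
      · intro v
        simp only [← hM, Matrix.mulVec_mulVec]
        rw [Matrix.nonsing_inv_mul _ hdetM, Matrix.one_mulVec]
      · intro v
        simp only [← hM, Matrix.mulVec_mulVec]
        rw [Matrix.mul_nonsing_inv _ hdetM, Matrix.one_mulVec]
    unfold inflCoord inflVec
    congr 1
    apply Fintype.sum_bijective _ hbij
    intro x
    simp only []
    rw [Matrix.mulVec_add]
  -- a permutation in the support of L
  have hdet : L.det ≠ 0 := ((Matrix.isUnit_iff_isUnit_det L).mp hL).ne_zero
  obtain ⟨σ, hσ⟩ : ∃ σ : Equiv.Perm (Fin n), ∀ i, L (σ i) i = 1 := by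
    rw [Matrix.det_apply] at hdet
    obtain ⟨σ, -, hσ⟩ := Finset.exists_ne_zero_of_sum_ne_zero hdet
    refine ⟨σ, fun i => ?_⟩
    have hprod : ∏ k, L (σ k) k ≠ 0 := by
      intro h; rw [h, smul_zero] at hσ; exact hσ rfl
    have hi := Finset.prod_ne_zero_iff.mp hprod i (Finset.mem_univ i)
    have h1 : ∀ a : ZMod 2, a ≠ 0 → a = 1 := by decide
    exact h1 _ hi
  have hcol : ∀ i, (L.mulVec (Pi.single i 1)) (σ i) = 1 := by
    intro i
    simp [Matrix.mulVec, dotProduct, Pi.single_apply, mul_ite,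
      Finset.sum_ite_eq', hσ i]
  calc totalInfl n f = ∑ i : Fin n, inflCoord n f (σ i) :=
        (Equiv.sum_comp σ (inflCoord n f)).symm
    _ ≤ ∑ i : Fin n, inflVec n f (L.mulVec (Pi.single i 1)) :=
        Finset.sum_le_sum fun i _ =>
          infl_coord_le_vec n f hf _ (σ i) (hcol i)
    _ = totalInfl n (fun x => f (L.mulVec x)) := by
        unfold totalInfl
        exact Finset.sum_congr rfl fun i _ => (hLcoord i).symm
end

section
/- Let f : {0,1}^n → {0,1} be a monotone Boolean function, fix i ∈ {1,…,n}, and let y ∈ {0,1}^n be a vector whose i-th coordinate equals 1. Then the influence of y on f is at least the influence of the i-th variable on f, i.e. I_y(f) ≥ I_i(f). -/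
open Finset

/-- If `f` is monotone and `y` has `i`-th coordinate equal to `1`,
then `I_y(f) ≥ I_i(f)`. -/
theorem inflCoord_le_inflVec_of_monotone (n : ℕ)
    (f : (Fin n → ZMod 2) → ZMod 2) (hf : IsMonotoneBF n f)
    (i : Fin n) (y : Fin n → ZMod 2) (hy : y i = 1) :
    inflCoord n f i ≤ inflVec n f y := by
  classical
  set e : Fin n → ZMod 2 := Pi.single i 1 with he
  set z : Fin n → ZMod 2 := y + e with hz
  have hvv : ∀ v : Fin n → ZMod 2, v + v = 0 := by
    intro v; funext j
    have h2 : ∀ a : ZMod 2, a + a = 0 := by decide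
    exact h2 (v j)
  have hye : y = z + e := by
    rw [hz, add_assoc, hvv, add_zero]
  have hzi : z i = 0 := by
    have h1 : z i = y i + e i := rfl
    rw [h1, hy, he, Pi.single_eq_same]; decide
  -- monotonicity along coordinate i
  have hmono : ∀ w : Fin n → ZMod 2, w i = 0 →
      ((f w).val : ℝ) ≤ ((f (w + e)).val : ℝ) := by
    intro w hw
    exact_mod_cast hf w (w + e) (fun j => by
      by_cases hji : j = i
      · subst hji
        have h1 : (w + e) j = w j + e j := rfl
        rw [h1, hw, he, Pi.single_eq_same]
        decide
      · have h1 : (w + e) j = w j + e j := rfl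
        rw [h1, he, Pi.single_eq_of_ne hji, add_zero])
  set A : (Fin n → ZMod 2) → ℝ := fun x => |((f (x + e)).val : ℝ) - ((f x).val : ℝ)| with hA
  set B : (Fin n → ZMod 2) → ℝ := fun x => |((f (x + y)).val : ℝ) - ((f x).val : ℝ)| with hB
  have hshift : ∀ g : (Fin n → ZMod 2) → ℝ,
      ∑ x : Fin n → ZMod 2, g (x + z) = ∑ x : Fin n → ZMod 2, g x :=
    fun g => Fintype.sum_equiv (Equiv.addRight z) _ _ (fun x => rfl)
  have hdouble : ∀ g : (Fin n → ZMod 2) → ℝ,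
      (∑ x : Fin n → ZMod 2, g x) + (∑ x : Fin n → ZMod 2, g x)
        = ∑ x : Fin n → ZMod 2, (g x + g (x + z)) := by
    intro g
    rw [Finset.sum_add_distrib, hshift g]
  have hpt : ∀ x : Fin n → ZMod 2, A x + A (x + z) ≤ B x + B (x + z) := by
    intro x
    have hxy : x + y = x + z + e := by
      rw [hz, add_assoc x (y + e) e, add_assoc y e e, hvv, add_zero]
    have hxzy : x + z + y = x + e := by
      rw [hye]
      calc x + z + (z + e) = x + (z + z) + e := by ring
        _ = x + e := by rw [hvv, add_zero]
    have hxz_i : (x + z) i = x i := by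
      have h1 : (x + z) i = x i + z i := rfl
      rw [h1, hzi, add_zero]
    simp only [hA, hB, hxy, hxzy]
    set a : ℝ := ((f x).val : ℝ)
    set b : ℝ := ((f (x + e)).val : ℝ)
    set c : ℝ := ((f (x + z)).val : ℝ)
    set d : ℝ := ((f (x + z + e)).val : ℝ)
    -- goal: |b - a| + |d - c| ≤ |d - a| + |b - c|
    have hcase : x i = 0 ∨ x i = 1 := by
      have h2 : ∀ u : ZMod 2, u = 0 ∨ u = 1 := by decide
      exact h2 (x i)
    rcases hcase with h0 | h1
    · have hab : a ≤ b := hmono x h0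
      have hcd : c ≤ d := hmono (x + z) (by rw [hxz_i, h0])
      rw [abs_of_nonneg (by linarith), abs_of_nonneg (by linarith)]
      have := le_abs_self (d - a)
      have := le_abs_self (b - c)
      linarith
    · have hxe_i : (x + e) i = 0 := by
        have hh : (x + e) i = x i + e i := rfl
        rw [hh, h1, he, Pi.single_eq_same]; decide
      have hxee : x + e + e = x := by rw [add_assoc, hvv, add_zero]
      have hba : b ≤ a := by
        have := hmono (x + e) hxe_i
        rwa [hxee] at this
      have hxze_i : (x + z + e) i = 0 := by
        have hh : (x + z + e) i = (x + z) i + e i := rfl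
        rw [hh, hxz_i, h1, he, Pi.single_eq_same]; decide
      have hxzee : x + z + e + e = x + z := by rw [add_assoc, hvv, add_zero]
      have hdc : d ≤ c := by
        have := hmono (x + z + e) hxze_i
        rwa [hxzee] at this
      rw [abs_of_nonpos (by linarith), abs_of_nonpos (by linarith)]
      have := neg_abs_le (d - a)
      have := neg_abs_le (b - c)
      linarith
  have key : (∑ x : Fin n → ZMod 2, A x) ≤ ∑ x : Fin n → ZMod 2, B x := by
    have h1 := hdouble A
    have h2 := hdouble B
    have h3 : ∑ x : Fin n → ZMod 2, (A x + A (x + z))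
        ≤ ∑ x : Fin n → ZMod 2, (B x + B (x + z)) :=
      Finset.sum_le_sum (fun x _ => hpt x)
    linarith
  unfold inflCoord inflVec
  have hpos : (0 : ℝ) ≤ 1 / 2 ^ n := by positivity
  exact mul_le_mul_of_nonneg_left key hpos
end
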